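/- arXiv:1411.7666 — 2 statements merged into one kernel-verified Lean document; each statement's English description precedes it below -/
import Mathlib

section
/- With slog(p,q) defined by slog(0,q)=0 and slog(p,q)=slog(p−⌈p/q⌉,q)+1, and s_q defined by s_q(0)=0, s_q(p)=s_q(p−1)+⌈(s_q(p−1)+1)/(q−1)⌉ for q ≥ 2: for every k ≥ 1, slog(k, q) = slog(s_q(p), q) = p, where p is the least natural number with k ≤ s_q(p). -/
def slog (q : ℕ) : ℕ → ℕ
  | 0 => 0
  | p + 1 => slog q (p + 1 - max 1 ((p + 1 + q - 1) / q)) + 1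
decreasing_by
  exact Nat.sub_lt (Nat.succ_pos p) (lt_of_lt_of_le Nat.zero_lt_one (le_max_left _ _))

def sfun (q : ℕ) : ℕ → ℕ
  | 0 => 0
  | p + 1 => sfun q p + (sfun q p + q - 1) / (q - 1)

/-!
The map `k ↦ k - ⌈k/q⌉` is monotone and sends `s_q(p+1)` to `s_q(p)` and `s_q(p+1) + 1` to
`s_q(p) + 1`. Hence it maps the block `(s_q(p), s_q(p+1)]` into the block `(s_q(p-1), s_q(p)]`
(into `{0}` when `p = 0`), and by induction on `p` the step logarithm equals `p + 1` on the
whole block `(s_q(p), s_q(p+1)]`, which contains `s_q(p+1)` itself.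
-/

/-- The argument of the recursive call in `slog`: `k - ⌈k / q⌉`. -/
def slogStep (q k : ℕ) : ℕ := k - (k + q - 1) / q

lemma slog_zero (q : ℕ) : slog q 0 = 0 := by
  rw [slog]

lemma slog_eq_slog_slogStep_add_one {q k : ℕ} (hq : 0 < q) (hk : 0 < k) :
    slog q k = slog q (slogStep q k) + 1 := by
  obtain ⟨k, rfl⟩ : ∃ k', k = k' + 1 := ⟨k - 1, by omega⟩
  have hceil : 1 ≤ (k + 1 + q - 1) / q := (Nat.le_div_iff_mul_le hq).2 (by omega)
  rw [slog, max_eq_right hceil, slogStep]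

lemma slogStep_mono {q : ℕ} (hq : 0 < q) : Monotone (slogStep q) := by
  refine monotone_nat_of_le_succ fun k => ?_
  have hsucc : (k + 1 + q - 1) / q = k / q + 1 := by
    rw [show k + 1 + q - 1 = k + q by omega, Nat.add_div_right _ hq]
  have hfloor : k / q ≤ (k + q - 1) / q := Nat.div_le_div_right (by omega)
  simp only [slogStep, hsucc]
  omega

lemma add_sub_one_div_eq_succ {q a t : ℕ} (h₁ : q * a < t) (h₂ : t ≤ q * a + q) :
    (t + q - 1) / q = a + 1 := by
  have hlo : (a + 1) * q = q * a + q := by ring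
  have hhi : (a + 1 + 1) * q = q * a + q + q := by ring
  exact Nat.div_eq_of_lt_le (by omega) (by omega)

lemma sfun_succ {q : ℕ} (hq : 2 ≤ q) (p : ℕ) :
    sfun q (p + 1) = sfun q p + (sfun q p / (q - 1) + 1) := by
  rw [sfun, Nat.add_sub_assoc (by omega), Nat.add_div_right _ (by omega)]

lemma sfun_lt_sfun_succ {q : ℕ} (hq : 2 ≤ q) (p : ℕ) : sfun q p < sfun q (p + 1) := by
  rw [sfun_succ hq]
  exact Nat.lt_add_of_pos_right (Nat.succ_pos _)

/-- Writing `s_q(p) = (q-1) a + r` with `r < q - 1`, one gets `s_q(p+1) = q a + r + 1`,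
so `⌈s_q(p+1) / q⌉ = ⌈(s_q(p+1) + 1) / q⌉ = a + 1`. -/
lemma sfun_succ_add_sub_one_div {q : ℕ} (hq : 2 ≤ q) (p : ℕ) {j : ℕ} (hj : j ≤ 1) :
    (sfun q (p + 1) + j + q - 1) / q = sfun q p / (q - 1) + 1 := by
  have hdiv := Nat.div_add_mod (sfun q p) (q - 1)
  have hmod : sfun q p % (q - 1) < q - 1 := Nat.mod_lt _ (by omega)
  have hmul :
      q * (sfun q p / (q - 1)) = (q - 1) * (sfun q p / (q - 1)) + sfun q p / (q - 1) := by
    rw [← Nat.succ_mul, Nat.succ_eq_add_one, Nat.sub_add_cancel (by omega)]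
  apply add_sub_one_div_eq_succ <;> rw [sfun_succ hq] <;> omega

lemma slogStep_sfun_succ {q : ℕ} (hq : 2 ≤ q) (p : ℕ) :
    slogStep q (sfun q (p + 1)) = sfun q p := by
  have h := sfun_succ_add_sub_one_div hq p (j := 0) zero_le_one
  rw [add_zero] at h
  rw [slogStep, h, sfun_succ hq]
  omega

lemma slogStep_sfun_succ_add_one {q : ℕ} (hq : 2 ≤ q) (p : ℕ) :
    slogStep q (sfun q (p + 1) + 1) = sfun q p + 1 := by
  rw [slogStep, sfun_succ_add_sub_one_div hq p le_rfl, sfun_succ hq]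
  omega

lemma slog_eq_of_sfun_lt_of_le_sfun_succ {q : ℕ} (hq : 2 ≤ q) (p : ℕ) {k : ℕ}
    (hlo : sfun q p < k) (hhi : k ≤ sfun q (p + 1)) : slog q k = p + 1 := by
  have hmono := slogStep_mono (q := q) (by omega)
  induction p generalizing k with
  | zero =>
    have hstep : slogStep q k ≤ sfun q 0 := slogStep_sfun_succ hq 0 ▸ hmono hhi
    rw [slog_eq_slog_slogStep_add_one (by omega) (by omega), Nat.le_zero.mp hstep, slog_zero]
  | succ p ih =>
    have hstep_le : slogStep q k ≤ sfun q (p + 1) := slogStep_sfun_succ hq (p + 1) ▸ hmono hhi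
    have hstep_gt : sfun q p + 1 ≤ slogStep q k :=
      slogStep_sfun_succ_add_one hq p ▸ hmono (Nat.succ_le_of_lt hlo)
    rw [slog_eq_slog_slogStep_add_one (by omega) (by omega), ih hstep_gt hstep_le]

theorem slog_eq_least_sfun_general (q k p : ℕ) (hq : 2 ≤ q)
    (hp : k ≤ sfun q p) (hmin : ∀ p' < p, sfun q p' < k) :
    slog q k = slog q (sfun q p) ∧ slog q (sfun q p) = p := by
  cases p with
  | zero =>
    obtain rfl : k = 0 := Nat.le_zero.mp hp
    exact ⟨rfl, slog_zero q⟩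
  | succ p =>
    have hk := slog_eq_of_sfun_lt_of_le_sfun_succ hq p (hmin p (Nat.lt_succ_self p)) hp
    have hs := slog_eq_of_sfun_lt_of_le_sfun_succ hq p (sfun_lt_sfun_succ hq p) le_rfl
    exact ⟨hk.trans hs.symm, hs⟩

/-- For `q ≥ 2` and `k ≥ 1`, if `p` is the least natural number with `k ≤ s_q(p)`,
then `slog q k = slog q (s_q(p)) = p`. -/
theorem slog_eq_least_sfun (q k p : ℕ) (hq : 2 ≤ q) (hk : 1 ≤ k)
    (hp : k ≤ sfun q p) (hmin : ∀ p' < p, sfun q p' < k) :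
    slog q k = slog q (sfun q p) ∧ slog q (sfun q p) = p :=
  slog_eq_least_sfun_general q k p hq hp hmin
end

section
/- If C is a code of Q_{n,m}, then dim(C) ≤ ⌈(dim(C^⊥)+1)/m⌉. -/
open Matrix

/-- The tropical, cyclical, commutative quantum graph `Q_{n,m}`: its edge space is spanned
by the identity together with `m` commuting positive self-adjoint operators `A i` with a
common orthonormal eigenbasis; for each `i`, `w i` lists the eigenvectors of `A i` in
decreasing order of eigenvalue `lam i`, the eigenvalues are tropically separated
(`0 < λ_{i,j+1} < λ_{i,j}/n²`), consecutive labelings are cyclic shifts by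
`⌊n/m⌋ (+1 for the first n mod m indices)`, and `ws` is the single-index relabeling in
which `w_{(k−1)m+1},…,w_{km}` each equal `w_{i,k}` for some `i`. -/
structure Qnm (n m : ℕ) where
  A : Fin m → Matrix (Fin n) (Fin n) ℂ
  herm : ∀ i, (A i).IsHermitian
  comm : ∀ i j, A i * A j = A j * A i
  lam : Fin m → Fin n → ℝ
  w : Fin m → Fin n → (Fin n → ℂ)
  ws : Fin n → (Fin n → ℂ)
  ortho : ∀ i j k, star (w i j) ⬝ᵥ w i k = if j = k then 1 else 0
  span : ∀ i, Submodule.span ℂ (Set.range (w i)) = ⊤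
  eig : ∀ i j, (A i).mulVec (w i j) = (lam i j : ℂ) • w i j
  pos : ∀ i j, 0 < lam i j
  tropical : ∀ i (j : Fin n) (h : (j : ℕ) + 1 < n),
    lam i ⟨(j : ℕ) + 1, h⟩ < lam i j / (n : ℝ) ^ 2
  cyclical : ∀ (i : Fin m) (hi : (i : ℕ) + 1 < m) (j : Fin n),
    w ⟨(i : ℕ) + 1, hi⟩ j =
      w i ⟨((j : ℕ) + n / m + if (i : ℕ) + 1 ≤ n % m then 1 else 0) % n,
        Nat.mod_lt _ (Nat.lt_of_le_of_lt (Nat.zero_le _) j.isLt)⟩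
  relabel : ∀ t : Fin n, ∃ i : Fin m,
    ws t = w i ⟨(t : ℕ) / m, Nat.lt_of_le_of_lt (Nat.div_le_self _ _) t.isLt⟩
  wsortho : ∀ s t, star (ws s) ⬝ᵥ ws t = if s = t then 1 else 0
  wsspan : Submodule.span ℂ (Set.range ws) = ⊤

/-- A code of `Q_{n,m}`: an (orthogonal projection onto a) subspace `C` with
`P_C A P_C = ε_C(A) P_C` for every edge operator `A` (equivalently, for the identity
and each basis operator `A i`). -/
def Qnm.IsCode {n m : ℕ} (Q : Qnm n m) (P : Matrix (Fin n) (Fin n) ℂ) : Prop :=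
  P.IsHermitian ∧ P * P = P ∧ ∀ i, ∃ ε : ℝ, P * Q.A i * P = (ε : ℂ) • P

/-!
Let `P` project onto the code, `r = dim C` and `P A_i P = ε_i P`. A vector of `C` orthogonal
to the top `r - 1` eigenvectors of `A_i` gives `ε_i ≤ λ_{i,r-1}` (min-max), while the trace of
`P A_i P` gives `ε_i r = ∑_j λ_{i,j} ‖P w_{i,j}‖²`. With the tropical gap
`λ_{i,r-1} < λ_{i,j} / n²` this forces `‖P w_{i,j}‖² < r / n²` for `j < r - 1`. The first
`(r - 1) m` vectors of the single-index labeling are of this form, so they carry total weight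
`< 1`; since `∑_t ‖P w_t‖² = r` and each weight is at most `1`, the remaining `n - (r - 1) m`
vectors number at least `r`, which is the claim.
-/

open Module RCLike
open scoped InnerProductSpace

lemma OrthonormalBasis.re_inner_apply_self_eq_sum {𝕜 E ι : Type*} [RCLike 𝕜]
    [NormedAddCommGroup E] [InnerProductSpace 𝕜 E] [Fintype ι] (b : OrthonormalBasis ι 𝕜 E)
    {A : E →L[𝕜] E} (hA : (A : E →ₗ[𝕜] E).IsSymmetric) {μ : ι → ℝ}
    (hb : ∀ j, A (b j) = (μ j : 𝕜) • b j) (u : E) :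
    re ⟪u, A u⟫_𝕜 = ∑ j, μ j * ‖⟪b j, u⟫_𝕜‖ ^ 2 := by
  rw [← b.sum_inner_mul_inner u (A u), map_sum]
  refine Finset.sum_congr rfl fun j _ ↦ ?_
  have hsymm : ⟪A (b j), u⟫_𝕜 = ⟪b j, A u⟫_𝕜 := hA (b j) u
  rw [← hsymm, hb, inner_smul_left, conj_ofReal, ← inner_conj_symm (b j) u, mul_left_comm,
    RCLike.mul_conj, RCLike.norm_conj, ← ofReal_pow, ← ofReal_mul, ofReal_re]

namespace Submodule

variable {𝕜 E : Type*} [RCLike 𝕜] [NormedAddCommGroup E] [InnerProductSpace 𝕜 E]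
  [FiniteDimensional 𝕜 E] (K : Submodule 𝕜 E)

lemma re_inner_starProjection_eq_norm_sq (v : E) :
    re ⟪v, K.starProjection v⟫_𝕜 = ‖K.starProjection v‖ ^ 2 := by
  rw [← inner_starProjection_left_eq_right, re_inner_starProjection_eq_normSq]
  rfl

lemma trace_starProjection :
    LinearMap.trace 𝕜 E K.starProjection = finrank 𝕜 K :=
  LinearMap.IsProj.trace ⟨K.starProjection_apply_mem, fun _ ↦ K.starProjection_eq_self_iff.mpr⟩

variable {ι : Type*} [Fintype ι] (b : OrthonormalBasis ι 𝕜 E)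

lemma re_trace_starProjection_comp_eq_sum {A : E →L[𝕜] E} {μ : ι → ℝ}
    (hA : ∀ j, A (b j) = (μ j : 𝕜) • b j) :
    re (LinearMap.trace 𝕜 E (K.starProjection ∘L A)) =
      ∑ j, μ j * ‖K.starProjection (b j)‖ ^ 2 := by
  rw [LinearMap.trace_eq_sum_inner _ b, map_sum]
  refine Finset.sum_congr rfl fun j _ ↦ ?_
  simp [hA, inner_smul_right, re_inner_starProjection_eq_norm_sq]

lemma sum_norm_starProjection_sq :
    ∑ j, ‖K.starProjection (b j)‖ ^ 2 = finrank 𝕜 K := by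
  simpa [trace_starProjection] using
    (K.re_trace_starProjection_comp_eq_sum b (A := ContinuousLinearMap.id 𝕜 E) (μ := 1)
      (by simp)).symm

variable {K}

lemma trace_starProjection_comp_eq_mul_finrank {A : E →L[𝕜] E} {ε : ℝ}
    (hK : K.starProjection ∘L A ∘L K.starProjection = (ε : 𝕜) • K.starProjection) :
    LinearMap.trace 𝕜 E (K.starProjection ∘L A) = ε * finrank 𝕜 K := by
  have hidem : K.starProjection ∘L K.starProjection = K.starProjection :=
    K.isIdempotentElem_starProjection
  calc LinearMap.trace 𝕜 E (K.starProjection ∘L A)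
      = LinearMap.trace 𝕜 E ((K.starProjection ∘L K.starProjection) ∘L A) := by rw [hidem]
    _ = LinearMap.trace 𝕜 E (K.starProjection ∘L A ∘L K.starProjection) := by
      rw [ContinuousLinearMap.comp_assoc, ContinuousLinearMap.toLinearMap_comp,
        LinearMap.trace_comp_comm', ← ContinuousLinearMap.toLinearMap_comp,
        ContinuousLinearMap.comp_assoc]
    _ = ε * finrank 𝕜 K := by
      rw [hK, ContinuousLinearMap.toLinearMap_smul, map_smul, trace_starProjection, smul_eq_mul]

lemma exists_mem_ne_zero_forall_inner_eq_zero {k : ℕ} (v : Fin k → E)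
    (hk : k < finrank 𝕜 K) : ∃ u ∈ K, u ≠ 0 ∧ ∀ j, ⟪v j, u⟫_𝕜 = 0 := by
  let φ : K →ₗ[𝕜] Fin k → 𝕜 := LinearMap.pi (fun j ↦ innerₛₗ 𝕜 (v j)) ∘ₗ K.subtype
  obtain ⟨u, hu, hu0⟩ := exists_mem_ne_zero_of_ne_bot
    (LinearMap.ker_ne_bot_of_finrank_lt (f := φ) (by simpa using hk))
  exact ⟨u, u.2, by simpa using hu0, fun j ↦ congrFun hu j⟩

lemma le_of_starProjection_comp_eq_smul {n : ℕ} (b : OrthonormalBasis (Fin n) 𝕜 E)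
    {A : E →L[𝕜] E} (hA : (A : E →ₗ[𝕜] E).IsSymmetric) {μ : Fin n → ℝ} (hμ : Antitone μ)
    (hb : ∀ j, A (b j) = (μ j : 𝕜) • b j) {ε : ℝ}
    (hK : K.starProjection ∘L A ∘L K.starProjection = (ε : 𝕜) • K.starProjection)
    (k : Fin n) (hk : (k : ℕ) < finrank 𝕜 K) : ε ≤ μ k := by
  obtain ⟨u, huK, hu0, hperp⟩ :=
    exists_mem_ne_zero_forall_inner_eq_zero (fun j ↦ b (Fin.castLE k.isLt.le j)) hk
  have hfix : K.starProjection u = u := K.starProjection_eq_self_iff.mpr huK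
  have hcompress : re ⟪u, A u⟫_𝕜 = ε * ‖u‖ ^ 2 := by
    have := congr(⟪u, $hK u⟫_𝕜)
    simp only [ContinuousLinearMap.comp_apply, FunLike.coe_smul, Pi.smul_apply, hfix,
      ← inner_starProjection_left_eq_right] at this
    rw [this, inner_smul_right, inner_self_eq_norm_sq_to_K, ← ofReal_pow, ← ofReal_mul,
      ofReal_re]
  have hbound : re ⟪u, A u⟫_𝕜 ≤ μ k * ‖u‖ ^ 2 := by
    rw [b.re_inner_apply_self_eq_sum hA hb, ← b.sum_sq_norm_inner_right, Finset.mul_sum]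
    refine Finset.sum_le_sum fun j _ ↦ ?_
    rcases lt_or_ge j k with hjk | hkj
    · simp [show ⟪b j, u⟫_𝕜 = 0 from hperp ⟨j, hjk⟩]
    · exact mul_le_mul_of_nonneg_right (hμ hkj) (sq_nonneg _)
  exact le_of_mul_le_mul_right (hcompress ▸ hbound) (by positivity)

lemma norm_starProjection_sq_lt_of_lt_div {n : ℕ} (b : OrthonormalBasis (Fin n) 𝕜 E)
    {A : E →L[𝕜] E} (hA : (A : E →ₗ[𝕜] E).IsSymmetric) {μ : Fin n → ℝ} (hμ : Antitone μ)
    (hμ0 : ∀ j, 0 ≤ μ j) (hb : ∀ j, A (b j) = (μ j : 𝕜) • b j) {ε : ℝ}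
    (hK : K.starProjection ∘L A ∘L K.starProjection = (ε : 𝕜) • K.starProjection)
    {c : ℝ} (hc : 0 < c) {j k : Fin n} (hk : (k : ℕ) < finrank 𝕜 K) (hgap : μ k < μ j / c) :
    ‖K.starProjection (b j)‖ ^ 2 < finrank 𝕜 K / c := by
  have hε : ε ≤ μ k := le_of_starProjection_comp_eq_smul b hA hμ hb hK k hk
  have htrace : ∑ i, μ i * ‖K.starProjection (b i)‖ ^ 2 = ε * finrank 𝕜 K := by
    rw [← K.re_trace_starProjection_comp_eq_sum b hb, trace_starProjection_comp_eq_mul_finrank hK,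
      ← ofReal_natCast, ← ofReal_mul, ofReal_re]
  have hsingle : μ j * ‖K.starProjection (b j)‖ ^ 2 ≤ ε * finrank 𝕜 K :=
    htrace ▸ Finset.single_le_sum (f := fun i ↦ μ i * ‖K.starProjection (b i)‖ ^ 2)
      (fun i _ ↦ mul_nonneg (hμ0 i) (sq_nonneg _)) (Finset.mem_univ j)
  have hμj : 0 < μ j := (div_pos_iff_of_pos_right hc).mp ((hμ0 k).trans_lt hgap)
  have hr : (0 : ℝ) < finrank 𝕜 K := by exact_mod_cast (Nat.zero_le _).trans_lt hk
  rw [lt_div_iff₀ hc]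
  refine lt_of_mul_lt_mul_left ?_ hμj.le
  calc μ j * (‖K.starProjection (b j)‖ ^ 2 * c) ≤ ε * finrank 𝕜 K * c := by
        rw [← mul_assoc]; gcongr
    _ ≤ μ k * finrank 𝕜 K * c := by gcongr
    _ < μ j / c * finrank 𝕜 K * c := by gcongr
    _ = μ j * finrank 𝕜 K := by field_simp

end Submodule
namespace EuclideanSpace

variable {𝕜 ι : Type*} [RCLike 𝕜] [Fintype ι] [DecidableEq ι]

lemma orthonormal_toLp_of_dotProduct {v : ι → ι → 𝕜}
    (hv : ∀ s t, star (v s) ⬝ᵥ v t = if s = t then 1 else 0) :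
    Orthonormal 𝕜 fun t ↦ WithLp.toLp 2 (v t) := by
  rw [orthonormal_iff_ite]
  intro s t
  rw [inner_toLp_toLp, dotProduct_comm, hv]

noncomputable def orthonormalBasisOfDotProduct (v : ι → ι → 𝕜)
    (hv : ∀ s t, star (v s) ⬝ᵥ v t = if s = t then 1 else 0) :
    OrthonormalBasis ι 𝕜 (EuclideanSpace 𝕜 ι) :=
  OrthonormalBasis.mk (orthonormal_toLp_of_dotProduct hv)
    ((orthonormal_toLp_of_dotProduct hv).linearIndependent.span_eq_top_of_card_eq_finrank'
      (by simp)).ge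

@[simp]
lemma coe_orthonormalBasisOfDotProduct (v : ι → ι → 𝕜)
    (hv : ∀ s t, star (v s) ⬝ᵥ v t = if s = t then 1 else 0) :
    ⇑(orthonormalBasisOfDotProduct v hv) = fun t ↦ WithLp.toLp 2 (v t) :=
  OrthonormalBasis.coe_mk _ _

end EuclideanSpace

namespace Matrix

variable {𝕜 ι : Type*} [RCLike 𝕜] [Fintype ι] [DecidableEq ι]

lemma exists_toEuclideanCLM_eq_starProjection {P : Matrix ι ι 𝕜} (hP : P.IsHermitian)
    (hPP : P * P = P) : ∃ K : Submodule 𝕜 (EuclideanSpace 𝕜 ι),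
      toEuclideanCLM (n := ι) (𝕜 := 𝕜) P = K.starProjection ∧ finrank 𝕜 K = P.rank := by
  have hproj : IsStarProjection (toEuclideanCLM (n := ι) (𝕜 := 𝕜) P) :=
    ⟨by rw [IsIdempotentElem, ← map_mul, hPP], by rw [IsSelfAdjoint, ← map_star, hP.star_eq]⟩
  obtain ⟨_, hK⟩ := isStarProjection_iff_eq_starProjection_range.mp hproj
  refine ⟨_, hK, ?_⟩
  rw [rank_eq_finrank_range_toLin P (EuclideanSpace.basisFun ι 𝕜).toBasis
    (EuclideanSpace.basisFun ι 𝕜).toBasis]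
  rfl

end Matrix

lemma lt_div_of_lt_of_succ_lt_div {n : ℕ} {c : ℝ} (hc : 1 ≤ c) {f : Fin n → ℝ}
    (hpos : ∀ j, 0 < f j) (hf : ∀ (j : Fin n) (h : (j : ℕ) + 1 < n), f ⟨j + 1, h⟩ < f j / c)
    {j k : Fin n} (hjk : j < k) : f k < f j / c := by
  obtain ⟨k, hk⟩ := k
  induction k with
  | zero => exact absurd hjk (Nat.not_lt_zero _)
  | succ k ih =>
    have hk' : k < n := by omega
    have hstep : f ⟨k + 1, hk⟩ < f ⟨k, hk'⟩ / c := hf ⟨k, hk'⟩ hk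
    rcases Nat.lt_succ_iff_lt_or_eq.mp (Fin.lt_def.mp hjk) with hjk | hjk
    · have hdiv : f ⟨k, hk'⟩ / c ≤ f ⟨k, hk'⟩ := div_le_self (hpos _).le hc
      linarith [ih hk' hjk]
    · rwa [show j = ⟨k, hk'⟩ from Fin.ext hjk]

lemma mul_le_sub_add_of_lt_on_initial {n m r : ℕ} (p : Fin n → ℝ)
    (hp1 : ∀ t, p t ≤ 1) (hsum : ∑ t, p t = r)
    (hsmall : ∀ t : Fin n, (t : ℕ) < (r - 1) * m → p t < r / n ^ 2) :
    r * m ≤ n - r + m := by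
  by_contra! h
  have hrn : r ≤ n := by
    have : ∑ t, p t ≤ ∑ _t : Fin n, (1 : ℝ) := Finset.sum_le_sum fun t _ ↦ hp1 t
    exact_mod_cast (by simpa [hsum] using this : (r : ℝ) ≤ n)
  have hr : 1 ≤ r := Nat.one_le_iff_ne_zero.mpr (by rintro rfl; simp at h)
  have hsplit :=
    Finset.sum_filter_add_sum_filter_not Finset.univ (fun t : Fin n ↦ (t : ℕ) < (r - 1) * m) p
  set front := Finset.univ.filter (fun t : Fin n ↦ (t : ℕ) < (r - 1) * m)
  set back := Finset.univ.filter (fun t : Fin n ↦ ¬ (t : ℕ) < (r - 1) * m)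
  have hback : back.card ≤ r - 1 := by
    have : back.card ≤ (Finset.Ico ((r - 1) * m) n).card :=
      Finset.card_le_card_of_injOn (fun t ↦ (t : ℕ))
        (fun t ht ↦ Finset.mem_Ico.mpr ⟨not_lt.mp (Finset.mem_filter.mp ht).2, t.isLt⟩)
        Fin.val_injective.injOn
    rw [Nat.card_Ico, Nat.sub_one_mul] at this
    have := Nat.le_mul_of_pos_left m hr
    omega
  have hback_sum : ∑ t ∈ back, p t ≤ r - 1 := by
    calc ∑ t ∈ back, p t ≤ back.card := by
          simpa using Finset.sum_le_sum fun t (_ : t ∈ back) ↦ hp1 t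
      _ ≤ ((r - 1 : ℕ) : ℝ) := by exact_mod_cast hback
      _ = r - 1 := by rw [Nat.cast_sub (by omega)]; simp
  have hfront_sum : ∑ t ∈ front, p t < 1 := by
    rcases front.eq_empty_or_nonempty with hfront | hfront
    · simp [hfront]
    calc ∑ t ∈ front, p t < ∑ t ∈ front, (r / n ^ 2 : ℝ) :=
          Finset.sum_lt_sum_of_nonempty hfront fun t ht ↦ hsmall t (Finset.mem_filter.mp ht).2
      _ ≤ n * (n / n ^ 2) := by
        rw [Finset.sum_const, nsmul_eq_mul]
        gcongr
        · exact_mod_cast (Finset.card_le_univ front).trans (by simp)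
      _ = 1 := by
        have := hfront.choose.pos
        rw [mul_div, ← sq, div_self (by positivity)]
  linarith

namespace Qnm

variable {n m : ℕ} (Q : Qnm n m)

noncomputable def wBasis (i : Fin m) : OrthonormalBasis (Fin n) ℂ (EuclideanSpace ℂ (Fin n)) :=
  EuclideanSpace.orthonormalBasisOfDotProduct (Q.w i) (Q.ortho i)

noncomputable def wsBasis : OrthonormalBasis (Fin n) ℂ (EuclideanSpace ℂ (Fin n)) :=
  EuclideanSpace.orthonormalBasisOfDotProduct Q.ws Q.wsortho

lemma isSymmetric_A (i : Fin m) :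
    (toEuclideanCLM (n := Fin n) (𝕜 := ℂ) (Q.A i) :
      EuclideanSpace ℂ (Fin n) →ₗ[ℂ] EuclideanSpace ℂ (Fin n)).IsSymmetric :=
  isSymmetric_toEuclideanLin_iff.mpr (Q.herm i)

lemma toEuclideanCLM_A_wBasis (i : Fin m) (j : Fin n) :
    toEuclideanCLM (n := Fin n) (𝕜 := ℂ) (Q.A i) (Q.wBasis i j) =
      (Q.lam i j : ℂ) • Q.wBasis i j := by
  simp [wBasis, toEuclideanCLM_toLp, Q.eig]

lemma lam_lt_div (i : Fin m) {j k : Fin n} (hjk : j < k) : Q.lam i k < Q.lam i j / n ^ 2 :=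
  lt_div_of_lt_of_succ_lt_div (one_le_pow₀ (by exact_mod_cast Nat.one_le_of_lt j.isLt))
    (Q.pos i) (Q.tropical i) hjk

lemma lam_antitone (i : Fin m) : Antitone (Q.lam i) := by
  intro j k hjk
  rcases hjk.eq_or_lt with rfl | hjk
  · rfl
  · exact (Q.lam_lt_div i hjk).le.trans
      (div_le_self (Q.pos i j).le (one_le_pow₀ (by exact_mod_cast Nat.one_le_of_lt j.isLt)))

lemma exists_wsBasis_eq_wBasis (t : Fin n) :
    ∃ i, Q.wsBasis t = Q.wBasis i ⟨t / m, (Nat.div_le_self _ _).trans_lt t.isLt⟩ := by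
  obtain ⟨i, hi⟩ := Q.relabel t
  exact ⟨i, by simp [wsBasis, wBasis, hi]⟩

lemma IsCode.exists_starProjection {P : Matrix (Fin n) (Fin n) ℂ} (hP : Q.IsCode P) :
    ∃ K : Submodule ℂ (EuclideanSpace ℂ (Fin n)), finrank ℂ K = P.rank ∧ ∀ i, ∃ ε : ℝ,
      K.starProjection ∘L toEuclideanCLM (n := Fin n) (𝕜 := ℂ) (Q.A i) ∘L K.starProjection =
        (ε : ℂ) • K.starProjection := by
  obtain ⟨hherm, hidem, hcode⟩ := hP
  obtain ⟨K, hPK, hrank⟩ := exists_toEuclideanCLM_eq_starProjection hherm hidem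
  refine ⟨K, hrank, fun i ↦ ?_⟩
  obtain ⟨ε, hε⟩ := hcode i
  have h := congr(toEuclideanCLM (n := Fin n) (𝕜 := ℂ) $hε)
  rw [map_mul, map_mul, map_smul, hPK, ContinuousLinearMap.mul_def,
    ContinuousLinearMap.mul_def, ContinuousLinearMap.comp_assoc] at h
  exact ⟨ε, h⟩

end Qnm

theorem code_dim_le_tropical_general {n m : ℕ} (hm : 1 ≤ m) (Q : Qnm n m)
    (P : Matrix (Fin n) (Fin n) ℂ) (hP : Q.IsCode P) :
    P.rank ≤ (n - P.rank + 1 + m - 1) / m := by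
  obtain ⟨K, hrank, hcode⟩ := Qnm.IsCode.exists_starProjection Q hP
  have hKn : finrank ℂ K ≤ n := by simpa using K.finrank_le
  rw [Nat.le_div_iff_mul_le hm, show n - P.rank + 1 + m - 1 = n - P.rank + m by omega, ← hrank]
  refine mul_le_sub_add_of_lt_on_initial (fun t ↦ ‖K.starProjection (Q.wsBasis t)‖ ^ 2)
    (fun t ↦ ?_) (K.sum_norm_starProjection_sq _) fun t ht ↦ ?_
  · exact pow_le_one₀ (norm_nonneg _)
      ((K.norm_starProjection_apply_le _).trans_eq (Q.wsBasis.norm_eq_one t))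
  obtain ⟨i, hi⟩ := Q.exists_wsBasis_eq_wBasis t
  obtain ⟨ε, hε⟩ := hcode i
  have hjk : t / m < finrank ℂ K - 1 := Nat.div_lt_of_lt_mul (by rwa [mul_comm])
  have hr : 0 < finrank ℂ K := (Nat.zero_lt_of_lt hjk).trans_le (Nat.sub_le _ _)
  have hk : finrank ℂ K - 1 < n := by omega
  simp only [hi]
  exact K.norm_starProjection_sq_lt_of_lt_div (Q.wBasis i) (Q.isSymmetric_A i) (Q.lam_antitone i)
    (fun j ↦ (Q.pos i j).le) (Q.toEuclideanCLM_A_wBasis i) hε (by have := t.pos; positivity)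
    (k := ⟨finrank ℂ K - 1, hk⟩) (Nat.sub_lt hr one_pos) (Q.lam_lt_div i (Fin.lt_def.mpr hjk))

/-- If `C` is a code of `Q_{n,m}`, then
`dim C ≤ ⌈(dim C^⊥ + 1)/m⌉ = ((n - dim C) + 1 + m - 1)/m`. -/
theorem code_dim_le_tropical {n m : ℕ} (hn : 1 ≤ n) (hm : 1 ≤ m) (Q : Qnm n m)
    (P : Matrix (Fin n) (Fin n) ℂ) (hP : Q.IsCode P) :
    P.rank ≤ (n - P.rank + 1 + m - 1) / m :=
  code_dim_le_tropical_general hm Q P hP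
end
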